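/- arXiv:1406.4253 — 7 statements merged into one kernel-verified Lean document; each statement's English description precedes it below -/
import Mathlib

section
/- Let E be a complex normed vector space, let r be a positive integer, let Q : E → ℂ be homogeneous of degree r and differentiable (over ℂ), let F : E → ℂ be differentiable (over ℂ), and let a ∈ ℂ. Define W(p, x) = p * Q(x) − a * p + F(x) on ℂ × E, and for a real number ε > 0 define the rescaled perturbed superpotential W_ε(p, x) = p * Q(x) − ε^r * a * p + ε^r * F(ε⁻¹ • x). If (p, x) is a critical point of W (fderiv ℂ W (p, x) = 0), then (p, ε • x) is a critical point of W_ε (fderiv ℂ W_ε (p, ε • x) = 0). -/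
/-!
Rescaling the `E` coordinate by `ε⁻¹` and multiplying by `ε ^ r` turns `W` into `W_ε`: by the
homogeneity of `Q`, `W_ε = ε ^ r • (W ∘ L)` with `L (p, y) = (p, ε⁻¹ • y)` a linear automorphism of
`ℂ × E`. The chain rule gives `D W_ε (p, ε • x) = ε ^ r • D W (p, x) ∘ L`, which vanishes with
`D W (p, x)`.
-/

theorem fderiv_const_smul_comp_continuousLinearEquiv {𝕜 R E F G : Type*}
    [NontriviallyNormedField 𝕜] [NormedAddCommGroup E] [NormedSpace 𝕜 E]
    [NormedAddCommGroup F] [NormedSpace 𝕜 F] [NormedAddCommGroup G] [NormedSpace 𝕜 G]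
    [DivisionSemiring R] [Module R G] [SMulCommClass 𝕜 R G] [ContinuousConstSMul R G]
    (c : R) (L : E ≃L[𝕜] F) (f : F → G) (x : E) :
    fderiv 𝕜 (c • (f ∘ L)) x = c • (fderiv 𝕜 f (L x)).comp (L : E →L[𝕜] F) := by
  rw [fderiv_const_smul_field, Pi.smul_apply, L.comp_right_fderiv]

theorem pow_mul_apply_inv_smul_of_homogeneous {𝕜 E : Type*} [Field 𝕜] [AddCommGroup E]
    [Module 𝕜 E] {r : ℕ} {Q : E → 𝕜} (hQ : ∀ (c : 𝕜) (x : E), Q (c • x) = c ^ r * Q x)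
    {c : 𝕜} (hc : c ≠ 0) (x : E) :
    c ^ r * Q (c⁻¹ • x) = Q x := by
  rw [hQ, ← mul_assoc, ← mul_pow, mul_inv_cancel₀ hc, one_pow, one_mul]

theorem critical_point_rescaled_perturbation_general
    {E : Type*} [NormedAddCommGroup E] [NormedSpace ℂ E]
    (r : ℕ) (Q : E → ℂ)
    (hQhom : ∀ (c : ℂ) (x : E), Q (c • x) = c ^ r * Q x)
    (F : E → ℂ) (a : ℂ)
    (ε : ℝ) (hε : 0 < ε)
    (W Wε : ℂ × E → ℂ)
    (hW : ∀ (p : ℂ) (x : E), W (p, x) = p * Q x - a * p + F x)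
    (hWε : ∀ (p : ℂ) (x : E),
      Wε (p, x) = p * Q x - (ε : ℂ) ^ r * a * p + (ε : ℂ) ^ r * F ((ε : ℂ)⁻¹ • x))
    (p : ℂ) (x : E) (hcrit : fderiv ℂ W (p, x) = 0) :
    fderiv ℂ Wε (p, (ε : ℂ) • x) = 0 := by
  have hε0 : (ε : ℂ) ≠ 0 := by exact_mod_cast hε.ne'
  set L : (ℂ × E) ≃L[ℂ] ℂ × E :=
    (ContinuousLinearEquiv.refl ℂ ℂ).prodCongr
      (ContinuousLinearEquiv.smulLeft (M₁ := E) (Units.mk0 (ε : ℂ) hε0)⁻¹)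
  have hL : ∀ (q : ℂ) (y : E), L (q, y) = (q, (ε : ℂ)⁻¹ • y) := fun _ _ => rfl
  have hWε_eq : Wε = (ε : ℂ) ^ r • (W ∘ L) := by
    funext ⟨q, y⟩
    rw [Pi.smul_apply, Function.comp_apply, hL, hWε, hW, smul_eq_mul,
      ← pow_mul_apply_inv_smul_of_homogeneous hQhom hε0 y]
    ring
  have hLx : L (p, (ε : ℂ) • x) = (p, x) := by
    rw [hL, inv_smul_smul₀ hε0]
  rw [hWε_eq, fderiv_const_smul_comp_continuousLinearEquiv, hLx, hcrit,
    ContinuousLinearMap.zero_comp, smul_zero]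

/-- Lemma 3.2(1): if `(p, x)` is a critical point of the perturbed
superpotential `W (p, x) = p * Q x - a * p + F x`, then `(p, ε • x)` is a
critical point of the rescaled perturbed superpotential
`W_ε (p, x) = p * Q x - ε^r * a * p + ε^r * F (ε⁻¹ • x)`. -/
theorem critical_point_rescaled_perturbation
    {E : Type*} [NormedAddCommGroup E] [NormedSpace ℂ E]
    (r : ℕ) (hr : 0 < r) (Q : E → ℂ)
    (hQhom : ∀ (c : ℂ) (x : E), Q (c • x) = c ^ r * Q x)
    (hQ : Differentiable ℂ Q) (F : E → ℂ) (hF : Differentiable ℂ F) (a : ℂ)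
    (ε : ℝ) (hε : 0 < ε)
    (W Wε : ℂ × E → ℂ)
    (hW : ∀ (p : ℂ) (x : E), W (p, x) = p * Q x - a * p + F x)
    (hWε : ∀ (p : ℂ) (x : E),
      Wε (p, x) = p * Q x - (ε : ℂ) ^ r * a * p + (ε : ℂ) ^ r * F ((ε : ℂ)⁻¹ • x))
    (p : ℂ) (x : E) (hcrit : fderiv ℂ W (p, x) = 0) :
    fderiv ℂ Wε (p, (ε : ℂ) • x) = 0 :=
  critical_point_rescaled_perturbation_general r Q hQhom F a ε hε W Wε hW hWε p x hcrit
end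

section
/- Let E be a complex normed vector space, let r be a positive integer, let Q : E → ℂ be homogeneous of degree r and differentiable (over ℂ), let F : E → ℂ be differentiable (over ℂ), and let a ∈ ℂ. Define W(p, x) = p * Q(x) − a * p + F(x) and, for real ε > 0, W_ε(p, x) = p * Q(x) − ε^r * a * p + ε^r * F(ε⁻¹ • x). Then the map (p, x) ↦ (p, ε • x) is a bijection from the critical set {(p, x) : fderiv ℂ W (p, x) = 0} onto the critical set {(p, x) : fderiv ℂ W_ε (p, x) = 0}. -/
/-!
Write `c = (ε : ℂ)` and let `T(p, x) = (p, c • x)`. Homogeneity gives `Q x = c ^ r * Q (c⁻¹ • x)`,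
so `W_ε = c ^ r • (W ∘ T⁻¹)`. Multiplying by the nonzero scalar `c ^ r` and precomposing with the
continuous linear automorphism `T⁻¹` both preserve the vanishing of the derivative, so `T` maps
the critical set of `W` exactly onto that of `W_ε`.
-/

section CriticalPoints

variable {𝕜 : Type*} [NontriviallyNormedField 𝕜]
  {X Y G : Type*} [NormedAddCommGroup X] [NormedSpace 𝕜 X]
  [NormedAddCommGroup Y] [NormedSpace 𝕜 Y] [NormedAddCommGroup G] [NormedSpace 𝕜 G]

theorem ContinuousLinearEquiv.comp_right_eq_zero_iff (L : X ≃L[𝕜] Y) (g : Y →L[𝕜] G) :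
    g.comp (L : X →L[𝕜] Y) = 0 ↔ g = 0 := by
  refine ⟨fun h => ContinuousLinearMap.ext fun y => ?_,
    fun h => h ▸ ContinuousLinearMap.zero_comp _⟩
  simpa using congrArg (fun φ : X →L[𝕜] G => φ (L.symm y)) h

theorem fderiv_const_smul_comp_continuousLinearEquiv_eq_zero_iff (L : X ≃L[𝕜] Y) {k : 𝕜}
    (hk : k ≠ 0) (f : Y → G) (x : X) :
    fderiv 𝕜 (fun z => k • f (L z)) x = 0 ↔ fderiv 𝕜 f (L x) = 0 := by
  have := invertibleOfNonzero hk
  change fderiv 𝕜 (k • (f ∘ L)) x = 0 ↔ _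
  rw [fderiv_const_smul_of_invertible, L.comp_right_fderiv, smul_eq_zero_iff_right hk,
    L.comp_right_eq_zero_iff]

theorem ContinuousLinearEquiv.bijOn_setOf_fderiv_eq_zero (L : X ≃L[𝕜] Y) {k : 𝕜} (hk : k ≠ 0)
    {f : X → G} {g : Y → G} (hg : ∀ y, g y = k • f (L.symm y)) :
    Set.BijOn L {x | fderiv 𝕜 f x = 0} {y | fderiv 𝕜 g y = 0} := by
  obtain rfl : g = fun y => k • f (L.symm y) := funext hg
  refine L.toEquiv.bijOn fun x => ?_
  simp [fderiv_const_smul_comp_continuousLinearEquiv_eq_zero_iff L.symm hk]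

end CriticalPoints

theorem rescaling_bijOn_critical_sets_general
    {E : Type*} [NormedAddCommGroup E] [NormedSpace ℂ E]
    (r : ℕ) (Q : E → ℂ)
    (hQhom : ∀ (c : ℂ) (x : E), Q (c • x) = c ^ r * Q x)
    (F : E → ℂ) (a : ℂ)
    (ε : ℝ) (hε : 0 < ε)
    (W Wε : ℂ × E → ℂ)
    (hW : ∀ (p : ℂ) (x : E), W (p, x) = p * Q x - a * p + F x)
    (hWε : ∀ (p : ℂ) (x : E),
      Wε (p, x) = p * Q x - (ε : ℂ) ^ r * a * p + (ε : ℂ) ^ r * F ((ε : ℂ)⁻¹ • x)) :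
    Set.BijOn (fun z : ℂ × E => (z.1, (ε : ℂ) • z.2))
      {z : ℂ × E | fderiv ℂ W z = 0} {z : ℂ × E | fderiv ℂ Wε z = 0} := by
  have hc : (ε : ℂ) ≠ 0 := Complex.ofReal_ne_zero.2 hε.ne'
  let T : (ℂ × E) ≃L[ℂ] (ℂ × E) :=
    (ContinuousLinearEquiv.refl ℂ ℂ).prodCongr (ContinuousLinearEquiv.smulLeft (Units.mk0 _ hc))
  have hT : ⇑T = fun z : ℂ × E => (z.1, (ε : ℂ) • z.2) := funext fun z => by simp [T]
  have hQ_rescale (x : E) : Q x = (ε : ℂ) ^ r * Q ((ε : ℂ)⁻¹ • x) := by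
    rw [← hQhom, smul_inv_smul₀ hc]
  rw [← hT]
  refine T.bijOn_setOf_fderiv_eq_zero (pow_ne_zero r hc) fun ⟨p, x⟩ => ?_
  have hTsymm : T.symm (p, x) = (p, (ε : ℂ)⁻¹ • x) :=
    T.symm_apply_eq.2 (by simp [hT, smul_inv_smul₀ hc])
  rw [hWε, hTsymm, hW, smul_eq_mul, hQ_rescale x]
  ring

/-- The map `(p, x) ↦ (p, ε • x)` is a bijection from the critical set of the
perturbed superpotential `W` onto the critical set of the rescaled perturbed
superpotential `W_ε`. -/
theorem rescaling_bijOn_critical_sets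
    {E : Type*} [NormedAddCommGroup E] [NormedSpace ℂ E]
    (r : ℕ) (hr : 0 < r) (Q : E → ℂ)
    (hQhom : ∀ (c : ℂ) (x : E), Q (c • x) = c ^ r * Q x)
    (hQ : Differentiable ℂ Q) (F : E → ℂ) (hF : Differentiable ℂ F) (a : ℂ)
    (ε : ℝ) (hε : 0 < ε)
    (W Wε : ℂ × E → ℂ)
    (hW : ∀ (p : ℂ) (x : E), W (p, x) = p * Q x - a * p + F x)
    (hWε : ∀ (p : ℂ) (x : E),
      Wε (p, x) = p * Q x - (ε : ℂ) ^ r * a * p + (ε : ℂ) ^ r * F ((ε : ℂ)⁻¹ • x)) :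
    Set.BijOn (fun z : ℂ × E => (z.1, (ε : ℂ) • z.2))
      {z : ℂ × E | fderiv ℂ W z = 0} {z : ℂ × E | fderiv ℂ Wε z = 0} :=
  rescaling_bijOn_critical_sets_general r Q hQhom F a ε hε W Wε hW hWε
end

section
/- Let E be a complex normed vector space, let r be a positive integer, let Q : E → ℂ be homogeneous of degree r and differentiable (over ℂ), let F : E → ℂ be differentiable (over ℂ), and let a ∈ ℂ. Define W(p, x) = p * Q(x) − a * p + F(x) and, for real ε > 0, W_ε(p, x) = p * Q(x) − ε^r * a * p + ε^r * F(ε⁻¹ • x). Suppose the perturbation is strongly regular, meaning: for any two critical points z₁, z₂ of W, if Im(W z₁) = Im(W z₂) then W z₁ = W z₂ (distinct critical values of W have distinct imaginary parts). Then the rescaled perturbation is also strongly regular: for any two critical points z₁, z₂ of W_ε, if Im(W_ε z₁) = Im(W_ε z₂) then W_ε z₁ = W_ε z₂. -/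
/-!
Rescaling `x ↦ ε⁻¹ • x` and the homogeneity of `Q` give `W_ε = ε ^ r • (W ∘ L)` for the linear
automorphism `L (p, x) = (p, ε⁻¹ • x)` of `ℂ × E`. Composing with a linear automorphism maps
critical points bijectively onto critical points without changing values, and multiplying by the
nonzero real number `ε ^ r` preserves critical points and scales real and imaginary parts alike;
both operations therefore preserve strong regularity.
-/

def StronglyRegular {X : Type*} [NormedAddCommGroup X] [NormedSpace ℂ X] (W : X → ℂ) : Prop :=
  ∀ z₁ z₂ : X, fderiv ℂ W z₁ = 0 → fderiv ℂ W z₂ = 0 → (W z₁).im = (W z₂).im → W z₁ = W z₂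

namespace StronglyRegular

variable {X Y : Type*} [NormedAddCommGroup X] [NormedSpace ℂ X]
  [NormedAddCommGroup Y] [NormedSpace ℂ Y] {W : Y → ℂ}

theorem comp_continuousLinearEquiv (hW : StronglyRegular W) (L : X ≃L[ℂ] Y) :
    StronglyRegular (W ∘ L) := by
  have hcrit : ∀ z, fderiv ℂ (W ∘ L) z = 0 → fderiv ℂ W (L z) = 0 := fun z hz => by
    rw [L.comp_right_fderiv] at hz
    simpa [ContinuousLinearMap.comp_assoc] using congrArg (·.comp (L.symm : Y →L[ℂ] X)) hz
  intro z₁ z₂ h₁ h₂ him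
  exact hW (L z₁) (L z₂) (hcrit z₁ h₁) (hcrit z₂ h₂) him

theorem real_smul (hW : StronglyRegular W) {c : ℝ} (hc : c ≠ 0) : StronglyRegular (c • W) := by
  intro z₁ z₂ h₁ h₂ him
  rw [fderiv_const_smul_field, Pi.smul_apply] at h₁ h₂
  simp only [Pi.smul_apply, Complex.smul_im, smul_eq_mul, mul_right_inj' hc] at him ⊢
  rw [hW z₁ z₂ ((smul_eq_zero_iff_right hc).mp h₁) ((smul_eq_zero_iff_right hc).mp h₂) him]

end StronglyRegular

theorem rescaled_superpotential_eq {E : Type*} [AddCommGroup E] [Module ℂ E] {r : ℕ}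
    {Q : E → ℂ} (hQ : ∀ (c : ℂ) (x : E), Q (c • x) = c ^ r * Q x) (a : ℂ) (F : E → ℂ)
    {c : ℂ} (hc : c ≠ 0) (p : ℂ) (x : E) :
    p * Q x - c ^ r * a * p + c ^ r * F (c⁻¹ • x) =
      c ^ r * (p * Q (c⁻¹ • x) - a * p + F (c⁻¹ • x)) := by
  have hcancel : c ^ r * c⁻¹ ^ r = 1 := by rw [← mul_pow, mul_inv_cancel₀ hc, one_pow]
  rw [hQ]
  linear_combination (-(p * Q x)) * hcancel

theorem rescaled_perturbation_strongly_regular_general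
    {E : Type*} [NormedAddCommGroup E] [NormedSpace ℂ E]
    (r : ℕ) (Q : E → ℂ)
    (hQhom : ∀ (c : ℂ) (x : E), Q (c • x) = c ^ r * Q x)
    (F : E → ℂ) (a : ℂ)
    (ε : ℝ) (hε : 0 < ε)
    (W Wε : ℂ × E → ℂ)
    (hW : ∀ (p : ℂ) (x : E), W (p, x) = p * Q x - a * p + F x)
    (hWε : ∀ (p : ℂ) (x : E),
      Wε (p, x) = p * Q x - (ε : ℂ) ^ r * a * p + (ε : ℂ) ^ r * F ((ε : ℂ)⁻¹ • x))
    (hreg : ∀ z₁ z₂ : ℂ × E, fderiv ℂ W z₁ = 0 → fderiv ℂ W z₂ = 0 →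
      (W z₁).im = (W z₂).im → W z₁ = W z₂) :
    ∀ z₁ z₂ : ℂ × E, fderiv ℂ Wε z₁ = 0 → fderiv ℂ Wε z₂ = 0 →
      (Wε z₁).im = (Wε z₂).im → Wε z₁ = Wε z₂ := by
  have hε₀ : (ε : ℂ) ≠ 0 := by exact_mod_cast hε.ne'
  let L : (ℂ × E) ≃L[ℂ] ℂ × E := (ContinuousLinearEquiv.refl ℂ ℂ).prodCongr
    (ContinuousLinearEquiv.smulLeft (Units.mk0 (ε : ℂ)⁻¹ (inv_ne_zero hε₀)))
  have hWε_eq : Wε = ε ^ r • (W ∘ L) := by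
    funext ⟨p, x⟩
    rw [hWε, rescaled_superpotential_eq hQhom a F hε₀, Pi.smul_apply, Complex.real_smul]
    simp [L, hW]
  rw [hWε_eq]
  exact (StronglyRegular.comp_continuousLinearEquiv hreg L).real_smul (pow_ne_zero r hε.ne')

/-- If the perturbation `(a, F)` is strongly regular (distinct critical values
of `W` have distinct imaginary parts), then the rescaled perturbation
`(ε^r a, ε^r F^ε)` is also strongly regular. -/
theorem rescaled_perturbation_strongly_regular
    {E : Type*} [NormedAddCommGroup E] [NormedSpace ℂ E]
    (r : ℕ) (hr : 0 < r) (Q : E → ℂ)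
    (hQhom : ∀ (c : ℂ) (x : E), Q (c • x) = c ^ r * Q x)
    (hQ : Differentiable ℂ Q) (F : E → ℂ) (hF : Differentiable ℂ F) (a : ℂ)
    (ε : ℝ) (hε : 0 < ε)
    (W Wε : ℂ × E → ℂ)
    (hW : ∀ (p : ℂ) (x : E), W (p, x) = p * Q x - a * p + F x)
    (hWε : ∀ (p : ℂ) (x : E),
      Wε (p, x) = p * Q x - (ε : ℂ) ^ r * a * p + (ε : ℂ) ^ r * F ((ε : ℂ)⁻¹ • x))
    (hreg : ∀ z₁ z₂ : ℂ × E, fderiv ℂ W z₁ = 0 → fderiv ℂ W z₂ = 0 →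
      (W z₁).im = (W z₂).im → W z₁ = W z₂) :
    ∀ z₁ z₂ : ℂ × E, fderiv ℂ Wε z₁ = 0 → fderiv ℂ Wε z₂ = 0 →
      (Wε z₁).im = (Wε z₂).im → Wε z₁ = Wε z₂ :=
  rescaled_perturbation_strongly_regular_general r Q hQhom F a ε hε W Wε hW hWε hreg
end

section
/- Let E be a complex normed vector space, let r be a positive integer, let Q : E → ℂ be homogeneous of degree r and differentiable (over ℂ), let F : E → ℂ be differentiable (over ℂ), and let a ∈ ℂ. For ξ ∈ ℂ with ξ ≠ 0, define W(p, x) = p * Q(x) − a * p + F(x) and W'(p, x) = p * Q(x) − (ξ^r * a) * p + F(ξ⁻¹ • x). Then the map (p, x) ↦ (ξ^{−r} * p, ξ • x) is a bijection from the critical set of W onto the critical set of W', and it preserves critical values: W'(ξ^{−r} * p, ξ • x) = W(p, x). In particular, if all distinct critical values of W have distinct imaginary parts, then the same holds for W'. -/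
/-! The map `φ(p, x) = (ξ^(-r) p, ξ • x)` is a continuous linear automorphism of `ℂ × E`, and
homogeneity of `Q` gives `W' ∘ φ = W`. Precomposition with a linear automorphism carries critical
points bijectively onto critical points (the derivative is composed with an isomorphism) and does not
change the set of critical values. -/

open Set

section

variable {𝕜 E F G : Type*} [NontriviallyNormedField 𝕜]
  [NormedAddCommGroup E] [NormedSpace 𝕜 E] [NormedAddCommGroup F] [NormedSpace 𝕜 F]
  [NormedAddCommGroup G] [NormedSpace 𝕜 G]

theorem ContinuousLinearEquiv.fderiv_comp_right_eq_zero_iff (e : E ≃L[𝕜] F) {f : F → G}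
    {x : E} : fderiv 𝕜 (f ∘ e) x = 0 ↔ fderiv 𝕜 f (e x) = 0 := by
  rw [e.comp_right_fderiv]
  refine ⟨fun h => ?_, fun h => by rw [h, ContinuousLinearMap.zero_comp]⟩
  simpa [ContinuousLinearMap.comp_assoc] using congrArg (·.comp (e.symm : F →L[𝕜] E)) h

theorem ContinuousLinearEquiv.bijOn_setOf_fderiv_comp_right_eq_zero (e : E ≃L[𝕜] F)
    (f : F → G) : BijOn e {x | fderiv 𝕜 (f ∘ e) x = 0} {y | fderiv 𝕜 f y = 0} := by
  simp_rw [e.fderiv_comp_right_eq_zero_iff]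
  exact e.bijective.bijOn_preimage (t := {y | fderiv 𝕜 f y = 0})

end

section

variable {E F : Type*} [NormedAddCommGroup E] [NormedSpace ℂ E] [NormedAddCommGroup F]
  [NormedSpace ℂ F]

/-- The strong regularity condition of the paper: distinct critical values of `f` have distinct
imaginary parts. -/
def CriticalValuesSeparatedByIm (f : E → ℂ) : Prop :=
  ∀ x₁ x₂ : E, fderiv ℂ f x₁ = 0 → fderiv ℂ f x₂ = 0 → (f x₁).im = (f x₂).im → f x₁ = f x₂

theorem ContinuousLinearEquiv.criticalValuesSeparatedByIm_comp_right (e : E ≃L[ℂ] F)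
    {f : F → ℂ} (hf : CriticalValuesSeparatedByIm f) : CriticalValuesSeparatedByIm (f ∘ e) := by
  intro x₁ x₂ h₁ h₂
  rw [e.fderiv_comp_right_eq_zero_iff] at h₁ h₂
  exact hf _ _ h₁ h₂

end

section

variable {E : Type*} [NormedAddCommGroup E] [NormedSpace ℂ E]

noncomputable def angularRescaling (r : ℕ) (u : ℂˣ) : (ℂ × E) ≃L[ℂ] (ℂ × E) :=
  (ContinuousLinearEquiv.smulLeft (u ^ (-(r : ℤ)))).prodCongr (ContinuousLinearEquiv.smulLeft u)

theorem angularRescaling_mk0_apply (r : ℕ) {ξ : ℂ} (hξ : ξ ≠ 0) (z : ℂ × E) :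
    angularRescaling r (Units.mk0 ξ hξ) z = (ξ ^ (-(r : ℤ)) * z.1, ξ • z.2) := by
  simp only [angularRescaling, ContinuousLinearEquiv.prodCongr_apply,
    ContinuousLinearEquiv.smulLeft_apply_apply, Units.smul_def, Units.val_zpow_eq_zpow_val,
    Units.val_mk0, smul_eq_mul]

def perturbedSuperpotential (Q : E → ℂ) (a : ℂ) (F : E → ℂ) (z : ℂ × E) : ℂ :=
  z.1 * Q z.2 - a * z.1 + F z.2

theorem perturbedSuperpotential_comp_angularRescaling {r : ℕ} {Q : E → ℂ}
    (hQhom : ∀ (c : ℂ) (x : E), Q (c • x) = c ^ r * Q x) (a : ℂ) (F : E → ℂ) {ξ : ℂ}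
    (hξ : ξ ≠ 0) :
    perturbedSuperpotential Q (ξ ^ r * a) (fun x => F (ξ⁻¹ • x)) ∘
        angularRescaling r (Units.mk0 ξ hξ) = perturbedSuperpotential Q a F := by
  ext ⟨p, x⟩
  simp only [Function.comp_apply, angularRescaling_mk0_apply, perturbedSuperpotential,
    hQhom, inv_smul_smul₀ hξ, zpow_neg, zpow_natCast]
  field_simp

end

theorem angular_rescaling_critical_points_general
    {E : Type*} [NormedAddCommGroup E] [NormedSpace ℂ E]
    (r : ℕ) (Q : E → ℂ)
    (hQhom : ∀ (c : ℂ) (x : E), Q (c • x) = c ^ r * Q x)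
    (F : E → ℂ) (a : ℂ)
    (ξ : ℂ) (hξ : ξ ≠ 0)
    (W W' : ℂ × E → ℂ)
    (hW : ∀ (p : ℂ) (x : E), W (p, x) = p * Q x - a * p + F x)
    (hW' : ∀ (p : ℂ) (x : E), W' (p, x) = p * Q x - (ξ ^ r * a) * p + F (ξ⁻¹ • x)) :
    Set.BijOn (fun z : ℂ × E => (ξ ^ (-(r : ℤ)) * z.1, ξ • z.2))
      {z : ℂ × E | fderiv ℂ W z = 0} {z : ℂ × E | fderiv ℂ W' z = 0} ∧
    (∀ (p : ℂ) (x : E), W' (ξ ^ (-(r : ℤ)) * p, ξ • x) = W (p, x)) ∧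
    ((∀ z₁ z₂ : ℂ × E, fderiv ℂ W z₁ = 0 → fderiv ℂ W z₂ = 0 →
        (W z₁).im = (W z₂).im → W z₁ = W z₂) →
      ∀ z₁ z₂ : ℂ × E, fderiv ℂ W' z₁ = 0 → fderiv ℂ W' z₂ = 0 →
        (W' z₁).im = (W' z₂).im → W' z₁ = W' z₂) := by
  set φ : (ℂ × E) ≃L[ℂ] (ℂ × E) := angularRescaling r (Units.mk0 ξ hξ)
  have hφ : ⇑φ = fun z : ℂ × E => (ξ ^ (-(r : ℤ)) * z.1, ξ • z.2) :=
    funext (angularRescaling_mk0_apply r hξ)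
  have hW'φ : W' ∘ φ = W := by
    have hW_eq : W = perturbedSuperpotential Q a F := funext fun z => hW z.1 z.2
    have hW'_eq : W' = perturbedSuperpotential Q (ξ ^ r * a) (fun x => F (ξ⁻¹ • x)) :=
      funext fun z => hW' z.1 z.2
    rw [hW_eq, hW'_eq, perturbedSuperpotential_comp_angularRescaling hQhom]
  have hW'_symm : W' = W ∘ φ.symm := by
    rw [← hW'φ, Function.comp_assoc, φ.self_comp_symm, Function.comp_id]
  refine ⟨?_, fun p x => ?_, ?_⟩
  · rw [← hφ, ← hW'φ]
    exact φ.bijOn_setOf_fderiv_comp_right_eq_zero W'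
  · rw [← hW'φ, hφ]
    rfl
  · rw [hW'_symm]
    exact φ.symm.criticalValuesSeparatedByIm_comp_right

/-- Angular part of the perturbation: the map `(p, x) ↦ (ξ^(-r) * p, ξ • x)` is
a bijection from the critical set of `W` onto that of `W'`, it preserves the
critical values, and consequently strong regularity of `W` implies that of `W'`. -/
theorem angular_rescaling_critical_points
    {E : Type*} [NormedAddCommGroup E] [NormedSpace ℂ E]
    (r : ℕ) (hr : 0 < r) (Q : E → ℂ)
    (hQhom : ∀ (c : ℂ) (x : E), Q (c • x) = c ^ r * Q x)
    (hQ : Differentiable ℂ Q) (F : E → ℂ) (hF : Differentiable ℂ F) (a : ℂ)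
    (ξ : ℂ) (hξ : ξ ≠ 0)
    (W W' : ℂ × E → ℂ)
    (hW : ∀ (p : ℂ) (x : E), W (p, x) = p * Q x - a * p + F x)
    (hW' : ∀ (p : ℂ) (x : E), W' (p, x) = p * Q x - (ξ ^ r * a) * p + F (ξ⁻¹ • x)) :
    Set.BijOn (fun z : ℂ × E => (ξ ^ (-(r : ℤ)) * z.1, ξ • z.2))
      {z : ℂ × E | fderiv ℂ W z = 0} {z : ℂ × E | fderiv ℂ W' z = 0} ∧
    (∀ (p : ℂ) (x : E), W' (ξ ^ (-(r : ℤ)) * p, ξ • x) = W (p, x)) ∧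
    ((∀ z₁ z₂ : ℂ × E, fderiv ℂ W z₁ = 0 → fderiv ℂ W z₂ = 0 →
        (W z₁).im = (W z₂).im → W z₁ = W z₂) →
      ∀ z₁ z₂ : ℂ × E, fderiv ℂ W' z₁ = 0 → fderiv ℂ W' z₂ = 0 →
        (W' z₁).im = (W' z₂).im → W' z₁ = W' z₂) :=
  angular_rescaling_critical_points_general r Q hQhom F a ξ hξ W W' hW hW'
end

section
/- Let E be a complex normed vector space, let Q, F : E → ℂ be differentiable (over ℂ), and let a ∈ ℂ be such that fderiv ℂ Q x ≠ 0 for every x with Q(x) = a (i.e. a is a regular value of Q). Define W(p, x) = p * Q(x) − a * p + F(x) on ℂ × E. Then the projection (p, x) ↦ x is a bijection from the critical set {(p, x) : fderiv ℂ W (p, x) = 0} onto the set of constrained critical points of F on the level set Q⁻¹({a}), namely {x : Q(x) = a and (fderiv ℂ F x) v = 0 for all v ∈ E with (fderiv ℂ Q x) v = 0}. -/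
/-!
Writing `W (p, x) = p * (Q x - a) + F x`, the partial derivative in `p` is `Q x - a` and the partial
derivative in `x` is `p • dQ + dF`, so `(p, x)` is critical exactly when `x` lies on the level set
and `-p` is a Lagrange multiplier for `F` there. A multiplier exists iff `dF` vanishes on
`ker dQ`, and it is unique because `dQ ≠ 0` on the level set.
-/

open ContinuousLinearMap

theorem LinearMap.exists_eq_smul_of_ker_le {K V : Type*} [Field K] [AddCommGroup V] [Module K V]
    {q f : V →ₗ[K] K} (h : LinearMap.ker q ≤ LinearMap.ker f) : ∃ c : K, f = c • q := by
  have hspan := mem_span_of_iInf_ker_le_ker (L := fun _ : Unit => q) (K := f) (by simpa using h)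
  rw [Set.range_const, Submodule.mem_span_singleton] at hspan
  obtain ⟨c, hc⟩ := hspan
  exact ⟨c, hc.symm⟩

section Lagrangian

variable {𝕜 E : Type*} [NontriviallyNormedField 𝕜] [NormedAddCommGroup E] [NormedSpace 𝕜 E]

theorem ContinuousLinearMap.smul_fst_add_comp_snd_eq_zero_iff (c : 𝕜) (L : E →L[𝕜] 𝕜) :
    c • fst 𝕜 𝕜 E + L.comp (snd 𝕜 𝕜 E) = 0 ↔ c = 0 ∧ L = 0 := by
  refine ⟨fun h => ⟨?_, ?_⟩, fun ⟨hc, hL⟩ => by ext <;> simp [hc, hL]⟩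
  · simpa using DFunLike.congr_fun h (1, 0)
  · ext v
    simpa using DFunLike.congr_fun h (0, v)

def lagrangian (Q F : E → 𝕜) (a : 𝕜) (z : 𝕜 × E) : 𝕜 := z.1 * Q z.2 - a * z.1 + F z.2

theorem hasFDerivAt_lagrangian {Q F : E → 𝕜} {x : E} (hQ : DifferentiableAt 𝕜 Q x)
    (hF : DifferentiableAt 𝕜 F x) (a p : 𝕜) :
    HasFDerivAt (lagrangian Q F a)
      ((Q x - a) • fst 𝕜 𝕜 E + (p • fderiv 𝕜 Q x + fderiv 𝕜 F x).comp (snd 𝕜 𝕜 E)) (p, x) := by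
  have hQ' := HasFDerivAt.comp (f := Prod.snd) (p, x) hQ.hasFDerivAt hasFDerivAt_snd
  have hF' := HasFDerivAt.comp (f := Prod.snd) (p, x) hF.hasFDerivAt hasFDerivAt_snd
  refine (((hasFDerivAt_fst.mul hQ').sub (hasFDerivAt_fst.const_mul a)).add hF').congr_fderiv ?_
  ext <;> simp

theorem fderiv_lagrangian_eq_zero_iff {Q F : E → 𝕜} {x : E} (hQ : DifferentiableAt 𝕜 Q x)
    (hF : DifferentiableAt 𝕜 F x) (a p : 𝕜) :
    fderiv 𝕜 (lagrangian Q F a) (p, x) = 0 ↔ Q x = a ∧ p • fderiv 𝕜 Q x + fderiv 𝕜 F x = 0 := by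
  rw [(hasFDerivAt_lagrangian hQ hF a p).fderiv, smul_fst_add_comp_snd_eq_zero_iff, sub_eq_zero]

end Lagrangian

/-- Over a regular value `a` of `Q`, the projection `(p, x) ↦ x` is a bijection
from the critical set of the Lagrange-multiplier superpotential
`W (p, x) = p * Q x - a * p + F x` onto the set of constrained critical points
of `F` on the level set `Q⁻¹ {a}`. -/
theorem lagrange_multiplier_critical_points_bijOn
    {E : Type*} [NormedAddCommGroup E] [NormedSpace ℂ E]
    (Q F : E → ℂ) (hQ : Differentiable ℂ Q) (hF : Differentiable ℂ F) (a : ℂ)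
    (ha : ∀ x : E, Q x = a → fderiv ℂ Q x ≠ 0)
    (W : ℂ × E → ℂ)
    (hW : ∀ (p : ℂ) (x : E), W (p, x) = p * Q x - a * p + F x) :
    Set.BijOn (fun z : ℂ × E => z.2)
      {z : ℂ × E | fderiv ℂ W z = 0}
      {x : E | Q x = a ∧ ∀ v : E, fderiv ℂ Q x v = 0 → fderiv ℂ F x v = 0} := by
  obtain rfl : W = lagrangian Q F a := funext fun z => hW z.1 z.2
  have hcrit : {z : ℂ × E | fderiv ℂ (lagrangian Q F a) z = 0} =
      {z | Q z.2 = a ∧ z.1 • fderiv ℂ Q z.2 + fderiv ℂ F z.2 = 0} := by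
    ext ⟨p, x⟩
    exact fderiv_lagrangian_eq_zero_iff (hQ x) (hF x) a p
  rw [hcrit]
  refine ⟨?mapsTo, ?injOn, ?surjOn⟩
  · rintro ⟨p, x⟩ ⟨hx, hpx⟩
    refine ⟨hx, fun v hv => ?_⟩
    simpa [hv] using DFunLike.congr_fun hpx v
  · rintro ⟨p₁, x⟩ ⟨hx, h₁⟩ ⟨p₂, _⟩ ⟨-, h₂⟩ rfl
    simp only [Prod.mk.injEq, and_true]
    exact smul_left_injective ℂ (ha x hx) (add_right_cancel (h₁.trans h₂.symm))
  · rintro x ⟨hx, hker⟩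
    obtain ⟨c, hc⟩ := LinearMap.exists_eq_smul_of_ker_le
      (q := (fderiv ℂ Q x : E →ₗ[ℂ] ℂ)) (f := fderiv ℂ F x) fun v hv => hker v hv
    refine ⟨(-c, x), ⟨hx, ?_⟩, rfl⟩
    rw [show fderiv ℂ F x = c • fderiv ℂ Q x from coe_injective hc]
    ext v
    simp
end

section
/- Let E be a finite-dimensional complex normed vector space, let r be a positive integer, let g : E →ₗ[ℂ] E be a linear map with g^r = id, and let Q : E → ℂ be differentiable (over ℂ) with Q ∘ g = Q. Suppose x ∈ E is fixed by g (g(x) = x) and the derivative of Q at x vanishes on the fixed subspace of g, i.e. (fderiv ℂ Q x) v = 0 for every v ∈ E with g(v) = v. Then fderiv ℂ Q x = 0; that is, x is a critical point of Q itself. In particular, if Q has a unique critical point ★, then ★ is the unique critical point of the restriction of Q to the fixed-point set of g. -/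
/-!
The derivative `φ = fderiv ℂ Q x` at a fixed point of `g` is itself `g`-invariant, `φ ∘ g = φ`.
For any `v`, the orbit sum `w = ∑_{i < r} gⁱ v` is fixed by `g` (as `g ^ r = 1`), so
`0 = φ w = r • φ v`, whence `φ v = 0`.
-/

open Finset

theorem Module.End.apply_geom_sum_apply_of_pow_eq_one {R M : Type*} [Ring R] [AddCommGroup M]
    [Module R M] {g : Module.End R M} {r : ℕ} (hgr : g ^ r = 1) (v : M) :
    g (∑ i ∈ range r, (g ^ i) v) = ∑ i ∈ range r, (g ^ i) v := by
  have h := congr($(mul_geom_sum g r) v)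
  simp only [hgr, sub_self, LinearMap.zero_apply, LinearMap.sub_apply, Module.End.mul_apply,
    Module.End.one_apply, LinearMap.sum_apply] at h
  exact sub_eq_zero.1 h

theorem LinearMap.comp_pow_eq_self {R M N : Type*} [Semiring R] [AddCommMonoid M] [Module R M]
    [AddCommMonoid N] [Module R N] {φ : M →ₗ[R] N} {g : Module.End R M} (h : φ ∘ₗ g = φ) :
    ∀ n : ℕ, φ ∘ₗ g ^ n = φ
  | 0 => rfl
  | n + 1 => by
    rw [pow_succ', Module.End.mul_eq_comp, ← LinearMap.comp_assoc, h, φ.comp_pow_eq_self h n]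

theorem LinearMap.eq_zero_of_comp_eq_self_of_vanishes_on_fixed {R M N : Type*} [Ring R]
    [AddCommGroup M] [Module R M] [AddCommGroup N] [Module R N] [IsAddTorsionFree N]
    {φ : M →ₗ[R] N} {g : Module.End R M} {r : ℕ} (hr : r ≠ 0) (hgr : g ^ r = 1)
    (hφg : φ ∘ₗ g = φ) (hfix : ∀ v, g v = v → φ v = 0) : φ = 0 := by
  ext v
  have hφ_avg : φ (∑ i ∈ Finset.range r, (g ^ i) v) = r • φ v := by
    simp only [map_sum, ← LinearMap.comp_apply, φ.comp_pow_eq_self hφg, sum_const, card_range]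
  have h_avg := hfix _ (Module.End.apply_geom_sum_apply_of_pow_eq_one hgr v)
  rw [hφ_avg, smul_eq_zero] at h_avg
  exact h_avg.resolve_left hr

theorem fderiv_comp_eq_self_of_comp_eq_self {𝕜 E F : Type*} [NontriviallyNormedField 𝕜]
    [NormedAddCommGroup E] [NormedSpace 𝕜 E] [NormedAddCommGroup F] [NormedSpace 𝕜 F]
    {f : E → F} {L : E →L[𝕜] E} {x : E} (hf : f ∘ L = f) (hx : L x = x) :
    (fderiv 𝕜 f x).comp L = fderiv 𝕜 f x := by
  by_cases hd : DifferentiableAt 𝕜 f x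
  · rw [← hx] at hd
    have h_chain := fderiv_comp x hd L.differentiableAt
    rwa [hf, L.fderiv, hx, eq_comm] at h_chain
  · simp [fderiv_zero_of_not_differentiableAt hd]

theorem critical_point_of_restriction_is_critical_general
    {E : Type*} [NormedAddCommGroup E] [NormedSpace ℂ E] [FiniteDimensional ℂ E]
    (r : ℕ) (hr : 0 < r) (g : E →ₗ[ℂ] E) (hgr : g ^ r = LinearMap.id)
    (Q : E → ℂ) (hg : ∀ x : E, Q (g x) = Q x)
    (x : E) (hx : g x = x)
    (hfix : ∀ v : E, g v = v → fderiv ℂ Q x v = 0) :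
    fderiv ℂ Q x = 0 := by
  have hφg : (fderiv ℂ Q x).comp g.toContinuousLinearMap = fderiv ℂ Q x :=
    fderiv_comp_eq_self_of_comp_eq_self (funext hg) hx
  exact ContinuousLinearMap.coe_injective <|
    LinearMap.eq_zero_of_comp_eq_self_of_vanishes_on_fixed hr.ne' hgr
      congr(($hφg : E →ₗ[ℂ] ℂ)) hfix

/-- For a finite-order linear symmetry `g` (with `g ^ r = id`) of a
differentiable function `Q` on a finite-dimensional complex space: if `x` is
fixed by `g` and the derivative of `Q` at `x` vanishes on the fixed subspace of
`g`, then `x` is a critical point of `Q` itself. -/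
theorem critical_point_of_restriction_is_critical
    {E : Type*} [NormedAddCommGroup E] [NormedSpace ℂ E] [FiniteDimensional ℂ E]
    (r : ℕ) (hr : 0 < r) (g : E →ₗ[ℂ] E) (hgr : g ^ r = LinearMap.id)
    (Q : E → ℂ) (hQ : Differentiable ℂ Q) (hg : ∀ x : E, Q (g x) = Q x)
    (x : E) (hx : g x = x)
    (hfix : ∀ v : E, g v = v → fderiv ℂ Q x v = 0) :
    fderiv ℂ Q x = 0 :=
  critical_point_of_restriction_is_critical_general r hr g hgr Q hg x hx hfix
end

section
/- Let F : ℂ → ℂ be differentiable on all of ℂ (entire), and let x : ℝ → ℂ be a differentiable, nonconstant map satisfying deriv x t = −conj(deriv F (x t)) for every t ∈ ℝ. Suppose x(t) converges to κ₊ ∈ ℂ as t → +∞ and to κ₋ ∈ ℂ as t → −∞. Then Im(F(κ₊)) = Im(F(κ₋)) and Re(F(κ₊)) < Re(F(κ₋)). -/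
/-!
Along the flow `x' = -conj (F' x)` the chain rule gives `(F ∘ x)' = F'(x) x' = -|F'(x)|²`, a real,
nonpositive number. Hence `Im (F ∘ x)` is constant and `Re (F ∘ x)` is antitone, strictly decreasing
wherever `F'(x) ≠ 0`, which must happen somewhere since `x` is not constant.
-/

open Filter Topology Complex ComplexConjugate

theorem exists_deriv_ne_zero_of_ne {𝕜 E : Type*} [RCLike 𝕜] [NormedAddCommGroup E]
    [NormedSpace 𝕜 E] {f : 𝕜 → E} (hf : Differentiable 𝕜 f) (hne : ∃ a b, f a ≠ f b) :
    ∃ t, deriv f t ≠ 0 := by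
  by_contra! hzero
  obtain ⟨a, b, hab⟩ := hne
  exact hab (is_const_of_deriv_eq_zero hf hzero a b)

theorem HasDerivAt.complex_re {f : ℝ → ℂ} {f' : ℂ} {t : ℝ} (h : HasDerivAt f f' t) :
    HasDerivAt (fun s => (f s).re) f'.re t := by
  simpa [Function.comp_def] using reCLM.hasFDerivAt.comp_hasDerivAt t h

theorem HasDerivAt.complex_im {f : ℝ → ℂ} {f' : ℂ} {t : ℝ} (h : HasDerivAt f f' t) :
    HasDerivAt (fun s => (f s).im) f'.im t := by
  simpa [Function.comp_def] using imCLM.hasFDerivAt.comp_hasDerivAt t h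

theorem hasDerivAt_comp_of_deriv_eq_neg_conj {F : ℂ → ℂ} {x : ℝ → ℂ} {t : ℝ}
    (hF : DifferentiableAt ℂ F (x t)) (hx : DifferentiableAt ℝ x t)
    (hflow : deriv x t = -conj (deriv F (x t))) :
    HasDerivAt (fun s => F (x s)) (-(normSq (deriv F (x t)) : ℂ)) t := by
  have hchain := hF.hasDerivAt.comp t hx.hasDerivAt
  rwa [hflow, mul_neg, mul_conj] at hchain

theorem eq_of_tendsto_atTop_atBot_of_hasDerivAt_zero {E : Type*} [NormedAddCommGroup E]
    [NormedSpace ℝ E] {f : ℝ → E} {a b : E} (hf : ∀ t, HasDerivAt f 0 t)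
    (ha : Tendsto f atTop (𝓝 a)) (hb : Tendsto f atBot (𝓝 b)) : a = b := by
  have hconst : f = fun _ => f 0 := funext fun t =>
    is_const_of_deriv_eq_zero (fun s => (hf s).differentiableAt) (fun s => (hf s).deriv) t 0
  rw [hconst] at ha hb
  exact (tendsto_nhds_unique tendsto_const_nhds ha).symm.trans
    (tendsto_nhds_unique tendsto_const_nhds hb)

theorem lt_of_tendsto_atTop_atBot_of_hasDerivAt_nonpos {f f' : ℝ → ℝ} {a b : ℝ}
    (hf : ∀ t, HasDerivAt f (f' t) t) (hf'_nonpos : ∀ t, f' t ≤ 0) (hf'_neg : ∃ t, f' t < 0)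
    (ha : Tendsto f atTop (𝓝 a)) (hb : Tendsto f atBot (𝓝 b)) : a < b := by
  have hanti : Antitone f := antitone_of_deriv_nonpos (fun t => (hf t).differentiableAt)
    fun t => (hf t).deriv ▸ hf'_nonpos t
  obtain ⟨t₀, ht₀⟩ := hf'_neg
  refine lt_of_le_of_ne ((hanti.le_of_tendsto ha t₀).trans (hanti.ge_of_tendsto hb t₀))
    fun hab => ht₀.ne ?_
  have hconst : f = fun _ => a := funext fun t =>
    le_antisymm (hab ▸ hanti.ge_of_tendsto hb t) (hanti.le_of_tendsto ha t)
  have hderiv := hf t₀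
  rw [hconst] at hderiv
  exact hderiv.unique (hasDerivAt_const t₀ a)

/-- Equation (4.2): the asymptotic limits `κ₊`, `κ₋` of a nonconstant BPS
soliton satisfy `Im F κ₊ = Im F κ₋` and `Re F κ₊ < Re F κ₋`. -/
theorem bps_soliton_asymptotics
    (F : ℂ → ℂ) (hF : Differentiable ℂ F)
    (x : ℝ → ℂ) (hx : Differentiable ℝ x)
    (hflow : ∀ t : ℝ, deriv x t = -(starRingEnd ℂ) (deriv F (x t)))
    (hnc : ∃ t₁ t₂ : ℝ, x t₁ ≠ x t₂)
    (κp κm : ℂ)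
    (hp : Filter.Tendsto x Filter.atTop (nhds κp))
    (hm : Filter.Tendsto x Filter.atBot (nhds κm)) :
    (F κp).im = (F κm).im ∧ (F κp).re < (F κm).re := by
  have hgrad t := hasDerivAt_comp_of_deriv_eq_neg_conj (hF (x t)) (hx t) (hflow t)
  have hFp := (hF.continuous.tendsto κp).comp hp
  have hFm := (hF.continuous.tendsto κm).comp hm
  obtain ⟨t₀, ht₀⟩ := exists_deriv_ne_zero_of_ne hx hnc
  have hF'_ne : deriv F (x t₀) ≠ 0 := fun h => ht₀ (by rw [hflow, h, map_zero, neg_zero])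
  constructor
  · exact eq_of_tendsto_atTop_atBot_of_hasDerivAt_zero
      (fun t => (hgrad t).complex_im.congr_deriv (by simp))
      ((continuous_im.tendsto _).comp hFp) ((continuous_im.tendsto _).comp hFm)
  · exact lt_of_tendsto_atTop_atBot_of_hasDerivAt_nonpos
      (fun t => (hgrad t).complex_re.congr_deriv (by simp))
      (fun t => neg_nonpos.mpr (normSq_nonneg (deriv F (x t))))
      ⟨t₀, neg_neg_iff_pos.mpr (normSq_pos.mpr hF'_ne)⟩
      ((continuous_re.tendsto _).comp hFp) ((continuous_re.tendsto _).comp hFm)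
end
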